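/- arXiv:2310.16381 — 3 statements merged into one kernel-verified Lean document; each statement's English description precedes it below -/
import Mathlib

section
/- Let a : ℤ → ℂ be not generic. Then a^⊥ is a nonzero subspace of V of finite codimension, and this codimension equals m, where m is the minimal value of ω(v) over all nonzero v ∈ a^⊥. -/
/-!
Let `Φ v = ∑ⱼ vⱼ a^{(j)}`, so that `a^⊥ = ker Φ` and `V ⧸ a^⊥ ≅ range Φ`. Fix a nonzero
`v ∈ a^⊥` of minimal width `m`, supported in `[l, r]` with `v l ≠ 0 ≠ v r`. Correlation is
symmetric, so every `x ∈ range Φ` satisfies the linear recurrence `∑ⱼ vⱼ x(i + j) = 0`, i.e.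
`v ∈ x^⊥`; its extreme coefficients are nonzero, so `x` is determined by its values on the window
`[0, m)`, whence `dim range Φ ≤ m`. Conversely a linear relation among `a^{(0)}, …, a^{(m-1)}`
would be an element of `a^⊥` of width `< m`, so these shifts are independent and
`dim range Φ ≥ m`.
-/

/-- For `x : ℤ → ℂ` and `n : ℤ`, the shift `x^{(n)}` is `i ↦ x (i + n)`. -/
def shiftFun (a : ℤ → ℂ) (n : ℤ) : ℤ → ℂ := fun i => a (i + n)

/-- The shift of a finitely supported function `v : ℤ →₀ ℂ`, as a linear map:
`(shiftVL n v) i = v (i + n)`. -/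
noncomputable def shiftVL (n : ℤ) : (ℤ →₀ ℂ) →ₗ[ℂ] (ℤ →₀ ℂ) :=
  (Finsupp.domLCongr (Equiv.addRight n).symm).toLinearMap

/-- `a^⊥`: the subspace of all `v ∈ ℤ →₀ ℂ` such that `⟨a, v^{(n)}⟩ = 0` for all
`n ∈ ℤ`, where `⟨a, w⟩ = ∑ i, a i * w i`. -/
noncomputable def perp (a : ℤ → ℂ) : Submodule ℂ (ℤ →₀ ℂ) :=
  ⨅ n : ℤ, LinearMap.ker ((Finsupp.linearCombination ℂ a).comp (shiftVL n))

/-- `ω(v) = r(v) - l(v)`, the difference between the maximum and the minimum of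
the support of `v` (junk value `0` for `v = 0`). -/
noncomputable def omegaV (v : ℤ →₀ ℂ) : ℕ :=
  ((WithBot.unbotD 0 v.support.max) - (WithTop.untopD 0 v.support.min)).toNat

open Finsupp

noncomputable def shiftCombination (a : ℤ → ℂ) : (ℤ →₀ ℂ) →ₗ[ℂ] (ℤ → ℂ) :=
  linearCombination ℂ (shiftFun a)

lemma shiftCombination_apply (a : ℤ → ℂ) (v : ℤ →₀ ℂ) (s : ℤ) :
    shiftCombination a v s = ∑ j ∈ v.support, v j * a (s + j) := by
  simp [shiftCombination, linearCombination_apply, Finsupp.sum, shiftFun]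

lemma perp_eq_ker_shiftCombination (a : ℤ → ℂ) :
    perp a = LinearMap.ker (shiftCombination a) := by
  ext v
  have shift_eq (n : ℤ) : linearCombination ℂ a (shiftVL n v) = shiftCombination a v (-n) := by
    change linearCombination ℂ a (equivMapDomain (Equiv.addRight n).symm v) = _
    rw [linearCombination_equivMapDomain, shiftCombination_apply, linearCombination_apply]
    refine Finset.sum_congr rfl fun j _ => ?_
    simp only [Function.comp, Equiv.addRight_symm, Equiv.coe_addRight, smul_eq_mul]
    ring_nf
  simp only [perp, Submodule.mem_iInf, LinearMap.mem_ker, LinearMap.coe_comp,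
    Function.comp_apply, shift_eq, funext_iff, Pi.zero_apply]
  exact ⟨fun h s => by simpa using h (-s), fun h n => h (-n)⟩

lemma mem_perp_iff {a : ℤ → ℂ} {v : ℤ →₀ ℂ} :
    v ∈ perp a ↔ ∀ s, ∑ j ∈ v.support, v j * a (s + j) = 0 := by
  simp [perp_eq_ker_shiftCombination, funext_iff, shiftCombination_apply]

lemma shiftCombination_comm (a : ℤ → ℂ) (v c : ℤ →₀ ℂ) :
    shiftCombination (shiftCombination a v) c = shiftCombination (shiftCombination a c) v := by
  ext s
  simp only [shiftCombination_apply, Finset.mul_sum]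
  rw [Finset.sum_comm]
  refine Finset.sum_congr rfl fun j _ => Finset.sum_congr rfl fun k _ => ?_
  ring_nf

lemma perp_le_perp_of_mem_range {a x : ℤ → ℂ} (hx : x ∈ LinearMap.range (shiftCombination a)) :
    perp a ≤ perp x := by
  obtain ⟨c, rfl⟩ := hx
  intro v hv
  rw [perp_eq_ker_shiftCombination, LinearMap.mem_ker] at hv ⊢
  rw [shiftCombination_comm, hv]
  ext s
  simp [shiftCombination_apply]

lemma apply_eq_zero_of_mem_perp {x : ℤ → ℂ} {v : ℤ →₀ ℂ} (hv : v ∈ perp x) {r n : ℤ}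
    (hr : v r ≠ 0) (h : ∀ j ∈ v.support, j ≠ r → x (n - r + j) = 0) : x n = 0 := by
  have hrec := mem_perp_iff.mp hv (n - r)
  rw [Finset.sum_eq_single_of_mem r (mem_support_iff.mpr hr)
    fun j hj hjr => by rw [h j hj hjr, mul_zero]] at hrec
  simpa [hr] using hrec

lemma eq_zero_of_mem_perp_of_vanishes_on_window {x : ℤ → ℂ} {v : ℤ →₀ ℂ} (hv : v ∈ perp x)
    {l r : ℤ} (hl : v l ≠ 0) (hr : v r ≠ 0) (hsupp : ∀ j ∈ v.support, l ≤ j ∧ j ≤ r)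
    (hx : ∀ k, 0 ≤ k → k < r - l → x k = 0) : x = 0 := by
  have band : ∀ K : ℕ, ∀ n : ℤ, -(K : ℤ) ≤ n → n < r - l + K → x n = 0 := by
    intro K
    induction K with
    | zero => intro n h₁ h₂; exact hx n (by omega) (by omega)
    | succ K ih =>
      intro n h₁ h₂
      by_cases hn : -(K : ℤ) ≤ n ∧ n < r - l + K
      · exact ih n hn.1 hn.2
      obtain hn | hn : n = r - l + K ∨ n = -(K + 1 : ℤ) := by omega
      · refine apply_eq_zero_of_mem_perp hv hr fun j hj hjr => ih _ ?_ ?_ <;>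
          have := hsupp j hj <;> omega
      · refine apply_eq_zero_of_mem_perp hv hl fun j hj hjl => ih _ ?_ ?_ <;>
          have := hsupp j hj <;> omega
  have hlr := (hsupp l (mem_support_iff.mpr hl)).2
  funext n
  exact band (n.natAbs + 1) n (by omega) (by omega)

lemma omegaV_eq_max'_sub_min' (v : ℤ →₀ ℂ) (hv : v.support.Nonempty) :
    (omegaV v : ℤ) = v.support.max' hv - v.support.min' hv := by
  rw [omegaV, ← Finset.coe_max' hv, ← Finset.coe_min' hv]
  exact Int.toNat_of_nonneg (sub_nonneg.mpr (Finset.min'_le_max' _ hv))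

lemma omegaV_lt_of_support_subset {c : ℤ →₀ ℂ} (hc : c ≠ 0) {m : ℕ}
    (h : ∀ j ∈ c.support, 0 ≤ j ∧ j < m) : omegaV c < m := by
  have hs := support_nonempty_iff.mpr hc
  have hmax := h _ (c.support.max'_mem hs)
  have hmin := h _ (c.support.min'_mem hs)
  have := omegaV_eq_max'_sub_min' c hs
  omega

noncomputable def windowEval (m : ℕ) : (ℤ → ℂ) →ₗ[ℂ] (Fin m → ℂ) :=
  LinearMap.pi fun k => LinearMap.proj (k : ℤ)

lemma windowEval_comp_subtype_range_injective {a : ℤ → ℂ} {v : ℤ →₀ ℂ} (hv : v ∈ perp a)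
    (hv0 : v ≠ 0) :
    Function.Injective
      ((windowEval (omegaV v)).comp (LinearMap.range (shiftCombination a)).subtype) := by
  rw [← LinearMap.ker_eq_bot, LinearMap.ker_eq_bot']
  rintro ⟨x, hx⟩ hwx
  have hs := support_nonempty_iff.mpr hv0
  have hω := omegaV_eq_max'_sub_min' v hs
  refine Subtype.ext (eq_zero_of_mem_perp_of_vanishes_on_window (perp_le_perp_of_mem_range hx hv)
    (mem_support_iff.mp (v.support.min'_mem hs)) (mem_support_iff.mp (v.support.max'_mem hs))
    (fun j hj => ⟨v.support.min'_le j hj, v.support.le_max' j hj⟩) fun k hk0 hkm => ?_)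
  have := congrFun hwx ⟨k.toNat, by omega⟩
  simpa [windowEval, Int.toNat_of_nonneg hk0] using this

lemma finiteDimensional_range_shiftCombination {a : ℤ → ℂ} {v : ℤ →₀ ℂ} (hv : v ∈ perp a)
    (hv0 : v ≠ 0) : FiniteDimensional ℂ (LinearMap.range (shiftCombination a)) :=
  FiniteDimensional.of_injective _ (windowEval_comp_subtype_range_injective hv hv0)

lemma finrank_range_shiftCombination_le {a : ℤ → ℂ} {v : ℤ →₀ ℂ} (hv : v ∈ perp a)
    (hv0 : v ≠ 0) : Module.finrank ℂ (LinearMap.range (shiftCombination a)) ≤ omegaV v := by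
  have := finiteDimensional_range_shiftCombination hv hv0
  simpa using LinearMap.finrank_le_finrank_of_injective
    (windowEval_comp_subtype_range_injective hv hv0)

lemma linearIndependent_shiftFun_of_le_omegaV {a : ℤ → ℂ} {m : ℕ}
    (hmin : ∀ v ∈ perp a, v ≠ 0 → m ≤ omegaV v) :
    LinearIndependent ℂ (fun k : Fin m => shiftFun a k) := by
  rw [linearIndependent_iff]
  intro g hg
  by_contra hg0
  set c := g.mapDomain (fun k : Fin m => (k : ℤ))
  have hc0 : c ≠ 0 := fun h => hg0 <|
    mapDomain_injective (fun _ _ h => Fin.ext (by exact_mod_cast h)) (h.trans mapDomain_zero.symm)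
  have hc : c ∈ perp a := by
    rwa [perp_eq_ker_shiftCombination, LinearMap.mem_ker, shiftCombination,
      linearCombination_mapDomain]
  have hsupp : ∀ j ∈ c.support, 0 ≤ j ∧ j < m := by
    intro j hj
    obtain ⟨k, -, rfl⟩ := Finset.mem_image.mp (mapDomain_support hj)
    exact ⟨by positivity, by exact_mod_cast k.isLt⟩
  exact (hmin c hc hc0).not_gt (omegaV_lt_of_support_subset hc0 hsupp)

lemma le_finrank_range_shiftCombination {a : ℤ → ℂ} {m : ℕ}
    [FiniteDimensional ℂ (LinearMap.range (shiftCombination a))]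
    (hmin : ∀ v ∈ perp a, v ≠ 0 → m ≤ omegaV v) :
    m ≤ Module.finrank ℂ (LinearMap.range (shiftCombination a)) := by
  have hmem (k : Fin m) : shiftFun a k ∈ LinearMap.range (shiftCombination a) :=
    ⟨single (k : ℤ) 1, by simp [shiftCombination]⟩
  have hli : LinearIndependent ℂ fun k => (⟨_, hmem k⟩ : LinearMap.range (shiftCombination a)) :=
    .of_comp (LinearMap.range (shiftCombination a)).subtype
      (linearIndependent_shiftFun_of_le_omegaV hmin)
  simpa using hli.fintype_card_le_finrank

/-- If `a : ℤ → ℂ` is not generic, then `a^⊥` is a nonzero subspace of `ℤ →₀ ℂ`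
of finite codimension, equal to the minimal value `m` of `ω(v)` over all
nonzero `v ∈ a^⊥`. -/
theorem perp_nonzero_and_finite_codimension (a : ℤ → ℂ)
    (ha : ¬ LinearIndependent ℂ (fun n : ℤ => shiftFun a n)) :
    perp a ≠ ⊥ ∧
    ∃ m : ℕ, IsLeast {k : ℕ | ∃ v ∈ perp a, v ≠ 0 ∧ omegaV v = k} m ∧
      ∃ _ : FiniteDimensional ℂ ((ℤ →₀ ℂ) ⧸ perp a),
        Module.finrank ℂ ((ℤ →₀ ℂ) ⧸ perp a) = m := by
  obtain ⟨c, hc, hc0⟩ : ∃ c ∈ perp a, c ≠ 0 := by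
    rw [linearIndependent_iff] at ha
    push Not at ha
    simpa [perp_eq_ker_shiftCombination, shiftCombination] using ha
  refine ⟨fun h => hc0 (by simpa [h] using hc), ?_⟩
  set S := {k : ℕ | ∃ v ∈ perp a, v ≠ 0 ∧ omegaV v = k}
  have hleast : IsLeast S (sInf S) :=
    ⟨Nat.sInf_mem ⟨_, c, hc, hc0, rfl⟩, fun k hk => Nat.sInf_le hk⟩
  obtain ⟨v, hv, hv0, hvm⟩ := hleast.1
  have := finiteDimensional_range_shiftCombination hv hv0
  let e : ((ℤ →₀ ℂ) ⧸ perp a) ≃ₗ[ℂ] LinearMap.range (shiftCombination a) :=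
    (Submodule.quotEquivOfEq _ _ (perp_eq_ker_shiftCombination a)).trans
      (shiftCombination a).quotKerEquivRange
  refine ⟨sInf S, hleast, .equiv e.symm, ?_⟩
  rw [e.finrank_eq]
  exact le_antisymm (hvm ▸ finrank_range_shiftCombination_le hv hv0)
    (le_finrank_range_shiftCombination fun w hw hw0 => hleast.2 ⟨w, hw, hw0, rfl⟩)
end

section
/- Let a : ℤ → ℂ be not generic, and let v ∈ a^⊥ be a nonzero element with ω(v) minimal among all nonzero elements of a^⊥. Then the family of all integer shifts (v^{(n)})_{n∈ℤ} is a basis of the subspace a^⊥; in particular, every element of a^⊥ is a (finite) linear combination of shifts of v, and these shifts are linearly independent. -/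
/-- The shift of a finitely supported function `v : ℤ →₀ ℂ`:
`(shiftV v n) i = v (i + n)`. -/
noncomputable def shiftV (v : ℤ →₀ ℂ) (n : ℤ) : ℤ →₀ ℂ :=
  Finsupp.equivMapDomain (Equiv.addRight n).symm v

/-!
If `w ∈ a^⊥` is supported in `[L, R)` and `ω(v) < R - L`, subtracting the multiple of the shift
of `v` that starts at `L` kills the coefficient of `w` at `L` and leaves it supported in
`[L + 1, R)`, still inside the shift-invariant space `a^⊥`. If instead `R - L ≤ ω(v)`, minimality
of `ω(v)` forces `w = 0`. Induction on `R - L` therefore puts every `w ∈ a^⊥` in the span of the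
shifts of `v`. The shifts are independent because in a finite combination the shift of largest
index `N` with nonzero coefficient is the only one that does not vanish at `l(v) - N`.
-/

open Finsupp

lemma shiftV_apply (v : ℤ →₀ ℂ) (n i : ℤ) : shiftV v n i = v (i + n) := rfl

lemma shiftV_shiftV (v : ℤ →₀ ℂ) (m n : ℤ) : shiftV (shiftV v m) n = shiftV v (n + m) := by
  ext i
  simp only [shiftV_apply, add_assoc]

lemma mem_perp_iff_s4 {a : ℤ → ℂ} {w : ℤ →₀ ℂ} :
    w ∈ perp a ↔ ∀ n, linearCombination ℂ a (shiftV w n) = 0 := by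
  simp only [perp, Submodule.mem_iInf, LinearMap.mem_ker, LinearMap.comp_apply]
  rfl

lemma shiftV_mem_perp {a : ℤ → ℂ} {w : ℤ →₀ ℂ} (hw : w ∈ perp a) (m : ℤ) :
    shiftV w m ∈ perp a := by
  rw [mem_perp_iff_s4] at hw ⊢
  intro n
  rw [shiftV_shiftV]
  exact hw (n + m)

lemma shiftV_mem_supported_Ico {v : ℤ →₀ ℂ} {L R : ℤ} (hv : v ∈ supported ℂ ℂ (Set.Ico L R))
    (n : ℤ) : shiftV v n ∈ supported ℂ ℂ (Set.Ico (L - n) (R - n)) := by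
  rw [mem_supported'] at hv ⊢
  intro i hi
  refine hv (i + n) fun h => hi ?_
  simp only [Set.mem_Ico] at h ⊢
  omega

lemma mem_supported_Ico_add_one {w : ℤ →₀ ℂ} {L R : ℤ} (hw : w ∈ supported ℂ ℂ (Set.Ico L R))
    (hwL : w L = 0) : w ∈ supported ℂ ℂ (Set.Ico (L + 1) R) := by
  rw [mem_supported'] at hw ⊢
  intro i hi
  rcases eq_or_ne i L with rfl | hiL
  · exact hwL
  refine hw i fun h => hi ?_
  simp only [Set.mem_Ico] at h ⊢
  omega

lemma omegaV_eq (w : ℤ →₀ ℂ) (h : w.support.Nonempty) :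
    omegaV w = (w.support.max' h - w.support.min' h).toNat := by
  rw [omegaV, ← Finset.coe_max' h, ← Finset.coe_min' h]
  rfl

lemma mem_supported_Ico_min' (w : ℤ →₀ ℂ) (h : w.support.Nonempty) :
    w ∈ supported ℂ ℂ (Set.Ico (w.support.min' h) (w.support.min' h + omegaV w + 1)) := by
  rw [mem_supported]
  intro i hi
  have := w.support.le_max' i hi
  have := w.support.min'_le_max' h
  rw [omegaV_eq w h]
  exact ⟨w.support.min'_le i hi, by omega⟩

lemma omegaV_lt_of_mem_supported_Ico {w : ℤ →₀ ℂ} {L R : ℤ}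
    (hw : w ∈ supported ℂ ℂ (Set.Ico L R)) (hw0 : w ≠ 0) : (omegaV w : ℤ) < R - L := by
  have h := support_nonempty_iff.mpr hw0
  rw [mem_supported] at hw
  have hmin := hw (w.support.min'_mem h)
  have hmax := hw (w.support.max'_mem h)
  simp only [Set.mem_Ico] at hmin hmax
  rw [omegaV_eq w h]
  omega

lemma sub_smul_shiftV_mem_supported_Ico {v w : ℤ →₀ ℂ} {L R Lv Rv : ℤ}
    (hw : w ∈ supported ℂ ℂ (Set.Ico L R)) (hv : v ∈ supported ℂ ℂ (Set.Ico Lv Rv))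
    (hvLv : v Lv ≠ 0) (hwidth : Rv - Lv ≤ R - L) :
    w - (w L / v Lv) • shiftV v (Lv - L) ∈ supported ℂ ℂ (Set.Ico (L + 1) R) := by
  apply mem_supported_Ico_add_one
  · have hsub : Set.Ico (Lv - (Lv - L)) (Rv - (Lv - L)) ⊆ Set.Ico L R := by
      intro i hi
      simp only [Set.mem_Ico] at hi ⊢
      omega
    exact Submodule.sub_mem _ hw
      (Submodule.smul_mem _ _ (supported_mono hsub (shiftV_mem_supported_Ico hv _)))
  · simp [shiftV_apply, hvLv]

theorem linearIndependent_shiftV {v : ℤ →₀ ℂ} (hv0 : v ≠ 0) : LinearIndependent ℂ (shiftV v) := by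
  have hne := support_nonempty_iff.mpr hv0
  set Lv := v.support.min' hne
  have hvLv : v Lv ≠ 0 := mem_support_iff.mp (v.support.min'_mem hne)
  rw [linearIndependent_iff']
  intro s g hsum
  by_contra! hg
  set t := s.filter (g · ≠ 0)
  have ht : t.Nonempty :=
    let ⟨i, his, hgi⟩ := hg
    ⟨i, Finset.mem_filter.mpr ⟨his, hgi⟩⟩
  set N := t.max' ht
  obtain ⟨hNs, hgN⟩ := Finset.mem_filter.mp (t.max'_mem ht)
  have hvanish : ∀ n ∈ s, n ≠ N → g n * v (Lv - N + n) = 0 := by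
    intro n hns hnN
    rcases eq_or_ne (g n) 0 with hgn | hgn
    · rw [hgn, zero_mul]
    have hnN' : n < N := lt_of_le_of_ne (t.le_max' n (Finset.mem_filter.mpr ⟨hns, hgn⟩)) hnN
    rw [notMem_support_iff.mp fun h => absurd (v.support.min'_le _ h) (by omega), mul_zero]
  have heval : (∑ n ∈ s, g n • shiftV v n) (Lv - N) = g N * v Lv := by
    simp only [Finset.sum_apply', Finsupp.smul_apply, shiftV_apply, smul_eq_mul]
    rw [Finset.sum_eq_single_of_mem N hNs hvanish, sub_add_cancel]
  rw [hsum, Finsupp.zero_apply] at heval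
  exact mul_ne_zero hgN hvLv heval.symm

lemma mem_span_range_shiftV_of_mem_supported_Ico {S : Submodule ℂ (ℤ →₀ ℂ)}
    (hS : ∀ w ∈ S, ∀ n, shiftV w n ∈ S) {v : ℤ →₀ ℂ} (hv : v ∈ S) (hv0 : v ≠ 0)
    (hmin : ∀ w ∈ S, w ≠ 0 → omegaV v ≤ omegaV w) (k : ℕ) :
    ∀ L : ℤ, ∀ w ∈ S, w ∈ supported ℂ ℂ (Set.Ico L (L + k)) →
      w ∈ Submodule.span ℂ (Set.range (shiftV v)) := by
  induction k with
  | zero =>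
    intro L w _ hw
    simp only [Nat.cast_zero, add_zero, Set.Ico_self, supported_empty, Submodule.mem_bot] at hw
    simp [hw]
  | succ k ih =>
    intro L w hwS hw
    by_cases hshort : (k + 1 : ℤ) ≤ omegaV v
    · by_cases hw0 : w = 0
      · simp [hw0]
      have := omegaV_lt_of_mem_supported_Ico hw hw0
      have := hmin w hwS hw0
      omega
    have hvne := support_nonempty_iff.mpr hv0
    set Lv := v.support.min' hvne
    have hvLv : v Lv ≠ 0 := mem_support_iff.mp (v.support.min'_mem hvne)
    have hw' := sub_smul_shiftV_mem_supported_Ico (Lv := Lv) hw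
      (mem_supported_Ico_min' v hvne) hvLv (by push_cast at hshort ⊢; omega)
    rw [show L + ↑(k + 1) = L + 1 + k by push_cast; ring] at hw'
    have hu : shiftV v (Lv - L) ∈ Submodule.span ℂ (Set.range (shiftV v)) :=
      Submodule.subset_span ⟨_, rfl⟩
    have hrest := ih (L + 1) _ (Submodule.sub_mem _ hwS (Submodule.smul_mem _ _ (hS v hv _))) hw'
    simpa only [sub_add_cancel] using Submodule.add_mem _ hrest (Submodule.smul_mem _ (w L / v Lv) hu)

theorem span_range_shiftV_eq {S : Submodule ℂ (ℤ →₀ ℂ)} (hS : ∀ w ∈ S, ∀ n, shiftV w n ∈ S)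
    {v : ℤ →₀ ℂ} (hv : v ∈ S) (hv0 : v ≠ 0) (hmin : ∀ w ∈ S, w ≠ 0 → omegaV v ≤ omegaV w) :
    Submodule.span ℂ (Set.range (shiftV v)) = S := by
  refine le_antisymm (Submodule.span_le.mpr ?_) fun w hw => ?_
  · rintro _ ⟨n, rfl⟩
    exact hS v hv n
  rcases eq_or_ne w 0 with rfl | hw0
  · exact Submodule.zero_mem _
  have hw' := mem_supported_Ico_min' w (support_nonempty_iff.mpr hw0)
  rw [add_assoc] at hw'
  exact mem_span_range_shiftV_of_mem_supported_Ico hS hv hv0 hmin (omegaV w + 1) _ w hw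
    (by exact_mod_cast hw')

theorem shifts_basis_of_perp_general (a : ℤ → ℂ)
    (v : ℤ →₀ ℂ) (hv : v ∈ perp a) (hv0 : v ≠ 0)
    (hmin : ∀ w ∈ perp a, w ≠ 0 → omegaV v ≤ omegaV w) :
    LinearIndependent ℂ (fun n : ℤ => shiftV v n) ∧
      Submodule.span ℂ (Set.range fun n : ℤ => shiftV v n) = perp a :=
  ⟨linearIndependent_shiftV hv0,
    span_range_shiftV_eq (fun _ hw n => shiftV_mem_perp hw n) hv hv0 hmin⟩

/-- If `a` is not generic and `v ∈ a^⊥` is nonzero with minimal `ω(v)`, then the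
integer shifts of `v` form a basis of `a^⊥`: they are linearly independent and
span `a^⊥`. -/
theorem shifts_basis_of_perp (a : ℤ → ℂ)
    (ha : ¬ LinearIndependent ℂ (fun n : ℤ => shiftFun a n))
    (v : ℤ →₀ ℂ) (hv : v ∈ perp a) (hv0 : v ≠ 0)
    (hmin : ∀ w ∈ perp a, w ≠ 0 → omegaV v ≤ omegaV w) :
    LinearIndependent ℂ (fun n : ℤ => shiftV v n) ∧
      Submodule.span ℂ (Set.range fun n : ℤ => shiftV v n) = perp a :=
  shifts_basis_of_perp_general a v hv hv0 hmin
end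

section
/- For each real number j > 1, the function a(j) : ℤ → ℂ defined by a(j)_i = 0 for i ≤ 0 and a(j)_i = j^i for i > 0 is strongly generic; that is, the family consisting of all shifts a(j)^{(n)} (n ∈ ℤ) together with the function i ↦ i·a(j)_i is linearly independent over ℂ. -/
/-! A finite relation `∑ₙ cₙ a⁽ⁿ⁾ + d · (i ↦ i aᵢ) = 0` is ruled out in two steps. Far to the right
every shift of `a` is a multiple of `i ↦ jⁱ`, whereas `i ↦ i jⁱ` is not eventually geometric, so
`d = 0`. The shifts themselves are independent: evaluating at `1 - m`, where `m` is the largest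
shift with `cₘ ≠ 0`, isolates `cₘ a₁`, since `a` vanishes on `i ≤ 0`. -/

/-- For `j : ℝ`, the function `a(j) : ℤ → ℂ` with `a(j)_i = j^i` for `i > 0`
and `a(j)_i = 0` for `i ≤ 0`. -/
noncomputable def aFun (j : ℝ) : ℤ → ℂ := fun i => if 0 < i then (j : ℂ) ^ i else 0

open Filter

theorem linearIndependent_shifts_of_eq_zero_of_nonpos {R : Type*} [Ring R] [NoZeroDivisors R]
    (f : ℤ → R) (hf : ∀ i ≤ 0, f i = 0) (h1 : f 1 ≠ 0) :
    LinearIndependent R (fun n : ℤ => fun i : ℤ => f (i + n)) := by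
  classical
  rw [linearIndependent_iff']
  intro s g hsum
  by_contra! ⟨n₀, hn₀s, hn₀⟩
  set S := s.filter (g · ≠ 0)
  have hS : S.Nonempty := ⟨n₀, Finset.mem_filter.2 ⟨hn₀s, hn₀⟩⟩
  set m := S.max' hS
  have hmS : m ∈ S := S.max'_mem hS
  have hval : ∑ n ∈ s, g n * f (1 - m + n) = g m * f 1 := by
    rw [Finset.sum_eq_single_of_mem m (Finset.mem_filter.1 hmS).1, sub_add_cancel]
    intro n hns hnm
    rcases hnm.lt_or_gt with hlt | hgt
    · rw [hf _ (by omega), mul_zero]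
    · have hn : n ∉ S := fun hnS => (S.le_max' n hnS).not_gt hgt
      simp only [S, Finset.mem_filter, hns, true_and, not_not] at hn
      rw [hn, zero_mul]
  have hzero := congrFun hsum (1 - m)
  simp only [Finset.sum_apply, Pi.smul_apply, smul_eq_mul, Pi.zero_apply, hval] at hzero
  exact (Finset.mem_filter.1 hmS).2 ((mul_eq_zero.1 hzero).resolve_right h1)

section eventuallyGeometric

variable {R : Type*} [CommSemiring R]

def eventuallyGeometric (r : R) : Submodule R (ℤ → R) where
  carrier := {u | ∀ᶠ i in atTop, u (i + 1) = r * u i}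
  add_mem' hu hv := (hu.and hv).mono fun i h => by simp [h.1, h.2, mul_add]
  zero_mem' := by simp
  smul_mem' c u hu := hu.mono fun i h => by simp [h, mul_left_comm]

variable {r : R}

theorem mem_eventuallyGeometric {u : ℤ → R} :
    u ∈ eventuallyGeometric r ↔ ∀ᶠ i in atTop, u (i + 1) = r * u i :=
  Iff.rfl

theorem shift_mem_eventuallyGeometric {u : ℤ → R} (hu : u ∈ eventuallyGeometric r) (n : ℤ) :
    (fun i => u (i + n)) ∈ eventuallyGeometric r :=
  ((tendsto_atTop_add_const_right _ n tendsto_id).eventually hu).mono fun i h => by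
    show u (i + 1 + n) = r * u (i + n)
    rwa [add_right_comm]

end eventuallyGeometric

theorem aFun_of_pos (j : ℝ) {i : ℤ} (hi : 0 < i) : aFun j i = (j : ℂ) ^ i := if_pos hi

theorem aFun_of_nonpos (j : ℝ) {i : ℤ} (hi : i ≤ 0) : aFun j i = 0 := if_neg hi.not_gt

theorem aFun_mem_eventuallyGeometric (j : ℝ) : aFun j ∈ eventuallyGeometric (j : ℂ) :=
  (eventually_gt_atTop 0).mono fun i hi => by
    lift i to ℕ using hi.le
    rw [aFun_of_pos j (by omega), aFun_of_pos j hi, ← Nat.cast_succ, zpow_natCast, zpow_natCast, pow_succ']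

theorem mul_aFun_notMem_eventuallyGeometric {j : ℝ} (hj : (j : ℂ) ≠ 0) :
    (fun i : ℤ => (i : ℂ) * aFun j i) ∉ eventuallyGeometric (j : ℂ) := by
  intro h
  obtain ⟨i, hrec, hi⟩ := (mem_eventuallyGeometric.1 h |>.and (eventually_gt_atTop 0)).exists
  simp only [aFun_of_pos j hi, aFun_of_pos j (hi.trans (lt_add_one i)), zpow_add_one₀ hj,
    Int.cast_add, Int.cast_one] at hrec
  exact mul_ne_zero (zpow_ne_zero i hj) hj (by linear_combination hrec)

/-- For each real `j > 1`, the function `a(j)` is strongly generic: the family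
of all its shifts `a(j)^{(n)}` (`n ∈ ℤ`) together with the function
`i ↦ i * a(j)_i` is linearly independent over `ℂ`. -/
theorem aFun_stronglyGeneric (j : ℝ) (hj : 1 < j) :
    LinearIndependent ℂ
      (Sum.elim
        (fun n : ℤ => fun i : ℤ => aFun j (i + n))
        (fun _ : Unit => fun i : ℤ => (i : ℂ) * aFun j i)) := by
  have hj0 : (j : ℂ) ≠ 0 := Complex.ofReal_ne_zero.2 (zero_lt_one.trans hj).ne'
  have hw := mul_aFun_notMem_eventuallyGeometric hj0
  have hshifts : Submodule.span ℂ (Set.range fun n : ℤ => fun i : ℤ => aFun j (i + n)) ≤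
      eventuallyGeometric (j : ℂ) :=
    Submodule.span_le.2 <| Set.range_subset_iff.2 <|
      shift_mem_eventuallyGeometric (aFun_mem_eventuallyGeometric j)
  rw [linearIndependent_sum]
  simp only [Function.comp_def, Sum.elim_inl, Sum.elim_inr, Set.range_const]
  exact ⟨linearIndependent_shifts_of_eq_zero_of_nonpos (aFun j) (fun i => aFun_of_nonpos j)
      (by rwa [aFun_of_pos j one_pos, zpow_one]),
    linearIndependent_unique_iff.2 fun h => hw (h ▸ Submodule.zero_mem _),
    (Submodule.disjoint_span_singleton_of_notMem hw).mono_left hshifts⟩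
end
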